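/- For any two real symmetric n×n matrices B_1, B_2, one has 2·‖[B_1,B_2]‖² ≤ (‖B_1‖² + ‖B_2‖²)². -/

import Mathlib

open Matrix BigOperators

/-- Squared Frobenius norm of a real square matrix. -/
def frobSq {n : ℕ} (A : Matrix (Fin n) (Fin n) ℝ) : ℝ := ∑ i, ∑ j, (A i j) ^ 2

/-- Commutator of two square matrices. -/
def matComm {n : ℕ} (A B : Matrix (Fin n) (Fin n) ℝ) : Matrix (Fin n) (Fin n) ℝ :=
  A * B - B * A

/-!
Conjugating by an orthogonal matrix preserves the Frobenius norm and commutators, so we may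
assume that the symmetric matrix `B₁` is diagonal, `B₁ = diag d`. Then the `(i, j)` entry of
`[B₁, B₂]` is `(dᵢ - dⱼ) (B₂)ᵢⱼ`, and `(dᵢ - dⱼ)² ≤ 2 (dᵢ² + dⱼ²) ≤ 2 ‖B₁‖²` gives
`‖[B₁, B₂]‖² ≤ 2 ‖B₁‖² ‖B₂‖²`; AM-GM finishes.
-/

theorem sq_sub_le_two_mul_sum_sq {ι : Type*} [Fintype ι] (d : ι → ℝ) (i j : ι) :
    (d i - d j) ^ 2 ≤ 2 * ∑ k, d k ^ 2 := by
  classical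
  rcases eq_or_ne i j with rfl | hij
  · simpa using Finset.sum_nonneg fun k _ => sq_nonneg (d k)
  · have hpair : d i ^ 2 + d j ^ 2 ≤ ∑ k, d k ^ 2 := by
      rw [← Finset.sum_pair (f := fun k => d k ^ 2) hij]
      exact Finset.sum_le_univ_sum_of_nonneg fun k => sq_nonneg (d k)
    nlinarith [sq_nonneg (d i + d j)]

section

variable {n : ℕ}

theorem frobSq_eq_trace (A : Matrix (Fin n) (Fin n) ℝ) : frobSq A = (Aᵀ * A).trace := by
  simp only [frobSq, trace, diag, mul_apply, transpose_apply, sq]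
  exact Finset.sum_comm

theorem frobSq_conjStarAlgAut (U : unitaryGroup (Fin n) ℝ) (M : Matrix (Fin n) (Fin n) ℝ) :
    frobSq (Unitary.conjStarAlgAut ℝ _ U M) = frobSq M := by
  set V : Matrix (Fin n) (Fin n) ℝ := ↑U
  have hstar : star V = Vᵀ := by
    rw [star_eq_conjTranspose, conjTranspose_eq_transpose_of_trivial]
  have hUU : Vᵀ * V = 1 := by
    rw [← hstar, Unitary.coe_star_mul_self]
  rw [Unitary.conjStarAlgAut_apply, hstar, frobSq_eq_trace, frobSq_eq_trace]
  calc ((V * M * Vᵀ)ᵀ * (V * M * Vᵀ)).trace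
      = (V * Mᵀ * (Vᵀ * V) * M * Vᵀ).trace := by
        simp only [transpose_mul, transpose_transpose, Matrix.mul_assoc]
    _ = (Vᵀ * (V * (Mᵀ * M))).trace := by
        rw [hUU, Matrix.mul_one, trace_mul_comm]
        simp only [Matrix.mul_assoc]
    _ = (Mᵀ * M).trace := by rw [← Matrix.mul_assoc, hUU, Matrix.one_mul]

theorem frobSq_diagonal (d : Fin n → ℝ) : frobSq (diagonal d) = ∑ k, d k ^ 2 := by
  refine Finset.sum_congr rfl fun i _ => ?_
  rw [Finset.sum_eq_single i (fun j _ hji => by simp [diagonal_apply_ne _ hji.symm])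
    (by simp)]
  simp

theorem matComm_diagonal_apply (d : Fin n → ℝ) (M : Matrix (Fin n) (Fin n) ℝ) (i j : Fin n) :
    matComm (diagonal d) M i j = (d i - d j) * M i j := by
  simp only [matComm, Matrix.sub_apply, diagonal_mul, mul_diagonal]
  ring

theorem frobSq_matComm_diagonal_le (d : Fin n → ℝ) (M : Matrix (Fin n) (Fin n) ℝ) :
    frobSq (matComm (diagonal d) M) ≤ 2 * frobSq (diagonal d) * frobSq M := by
  rw [frobSq_diagonal, frobSq, frobSq, Finset.mul_sum]
  gcongr with i _
  rw [Finset.mul_sum]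
  gcongr with j _
  rw [matComm_diagonal_apply, mul_pow]
  exact mul_le_mul_of_nonneg_right (sq_sub_le_two_mul_sum_sq d i j) (sq_nonneg _)

theorem frobSq_matComm_le_of_isSymm {A : Matrix (Fin n) (Fin n) ℝ} (hA : A.IsSymm)
    (M : Matrix (Fin n) (Fin n) ℝ) :
    frobSq (matComm A M) ≤ 2 * frobSq A * frobSq M := by
  have hH : A.IsHermitian := isHermitian_iff_isSymm.mpr hA
  set φ := Unitary.conjStarAlgAut ℝ _ (star hH.eigenvectorUnitary)
  have hφA : φ A = diagonal hH.eigenvalues := by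
    have h := hH.conjStarAlgAut_star_eigenvectorUnitary
    rwa [RCLike.ofReal_real_eq_id, Function.id_comp] at h
  have hφ_matComm : φ (matComm A M) = matComm (φ A) (φ M) := by
    simp only [matComm, map_sub, map_mul]
  calc frobSq (matComm A M) = frobSq (matComm (φ A) (φ M)) := by
        rw [← hφ_matComm, frobSq_conjStarAlgAut]
    _ ≤ 2 * frobSq (φ A) * frobSq (φ M) := by
        rw [hφA]
        exact frobSq_matComm_diagonal_le _ _
    _ = 2 * frobSq A * frobSq M := by rw [frobSq_conjStarAlgAut, frobSq_conjStarAlgAut]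

end

theorem ddvv_two_symmetric_general (n : ℕ) (B₁ B₂ : Matrix (Fin n) (Fin n) ℝ)
    (h₁ : B₁ᵀ = B₁) :
    2 * frobSq (matComm B₁ B₂) ≤ (frobSq B₁ + frobSq B₂) ^ 2 := by
  have hcomm := frobSq_matComm_le_of_isSymm h₁ B₂
  nlinarith [sq_nonneg (frobSq B₁ - frobSq B₂)]

/-- The commutator estimate for two real symmetric matrices. -/
theorem ddvv_two_symmetric (n : ℕ) (B₁ B₂ : Matrix (Fin n) (Fin n) ℝ)
    (h₁ : B₁ᵀ = B₁) (h₂ : B₂ᵀ = B₂) :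
    2 * frobSq (matComm B₁ B₂) ≤ (frobSq B₁ + frobSq B₂) ^ 2 :=
  ddvv_two_symmetric_general n B₁ B₂ h₁
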